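/- arXiv:1408.5423 — 5 statements merged into one kernel-verified Lean document; each statement's English description precedes it below -/
import Mathlib

section
/- Let F, A : X → B be maps from a nonempty set X to a Banach space B. Suppose there exists a constant K with 0<K<1 such that ‖F[u]−F[v]−(A[u]−A[v])‖ ≤ K‖A[u]−A[v]‖ for all u,v∈X. If A is a bijection, then F is a bijection. -/
/-- Campanato's theorem on near operators:
If `F, A : X → B` (X nonempty, B a Banach space) satisfy
`‖F u − F v − (A u − A v)‖ ≤ K ‖A u − A v‖` for all `u, v` with `0 < K < 1`,
and `A` is a bijection, then `F` is a bijection. -/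
theorem stmt1 {X : Type*} [Nonempty X] {B : Type*} [NormedAddCommGroup B]
    [NormedSpace ℝ B] [CompleteSpace B]
    (F A : X → B) (K : ℝ) (hK0 : 0 < K) (hK1 : K < 1)
    (hnear : ∀ u v : X, ‖F u - F v - (A u - A v)‖ ≤ K * ‖A u - A v‖)
    (hA : Function.Bijective A) : Function.Bijective F := by
  constructor
  · -- injectivity
    intro u v huv
    have h := hnear u v
    rw [huv, sub_self, zero_sub, norm_neg] at h
    have : A u - A v = 0 := by
      by_contra hne
      have hpos : 0 < ‖A u - A v‖ := norm_pos_iff.mpr hne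
      nlinarith
    exact hA.1 (sub_eq_zero.mp this)
  · -- surjectivity
    intro y
    set e := Equiv.ofBijective A hA with he
    -- the map f b = b - F (e.symm b) + y is a K-contraction
    set f : B → B := fun b => b - F (e.symm b) + y with hf
    have hlip : LipschitzWith K.toNNReal f := by
      apply LipschitzWith.of_dist_le_mul
      intro a b
      simp only [hf, dist_eq_norm]
      have h := hnear (e.symm a) (e.symm b)
      have ha : A (e.symm a) = a := e.apply_symm_apply a
      have hb : A (e.symm b) = b := e.apply_symm_apply b
      rw [ha, hb] at h
      have : a - F (e.symm a) + y - (b - F (e.symm b) + y)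
          = -(F (e.symm a) - F (e.symm b) - (a - b)) := by abel
      rw [this, norm_neg, Real.coe_toNNReal _ hK0.le]
      exact h
    have hcontr : ContractingWith K.toNNReal f :=
      ⟨by rwa [← NNReal.coe_lt_one, Real.coe_toNNReal _ hK0.le], hlip⟩
    obtain ⟨b, hb, -⟩ := hcontr.exists_fixedPoint (Classical.arbitrary B |> fun _ => y)
      (by simp [edist_ne_top])
    refine ⟨e.symm b, ?_⟩
    have h : b - F (e.symm b) + y = b := hb
    have h0 : b - F (e.symm b) + y - b = 0 := sub_eq_zero.mpr h
    have h1 : F (e.symm b) - y = 0 := by rw [← neg_eq_zero, ← h0]; abel_nf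
    exact sub_eq_zero.mp h1
end

section
/- Let F, A : X → B as in Campanato's nearness condition with constant 0<K<1, and suppose A is a bijection. Then for every f∈B, the unique u∈X with F[u]=f is the unique fixed point of the map T[u] := A^{-1}(A[u] − (F[u]−f)), and T is a K-contraction on X equipped with the metric d(u,v) := ‖A[u]−A[v]‖. -/
/-- Under Campanato's nearness condition with constant `0 < K < 1` and `A`
a bijection, for every `f ∈ B` there is a unique `u` with `F u = f`; it is the unique
fixed point of `T u := A⁻¹(A u − (F u − f))`, and `T` is a `K`-contraction for the
pulled-back metric `d(u,v) := ‖A u − A v‖`. -/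
theorem stmt2 {X : Type*} [Nonempty X] {B : Type*} [NormedAddCommGroup B]
    [NormedSpace ℝ B] [CompleteSpace B]
    (F A : X → B) (K : ℝ) (hK0 : 0 < K) (hK1 : K < 1)
    (hnear : ∀ u v : X, ‖F u - F v - (A u - A v)‖ ≤ K * ‖A u - A v‖)
    (hA : Function.Bijective A) (f : B) :
    (∃! u : X, F u = f) ∧
    (∀ u : X, F u = f ↔ Function.invFun A (A u - (F u - f)) = u) ∧
    (∀ u v : X,
      ‖A (Function.invFun A (A u - (F u - f))) - A (Function.invFun A (A v - (F v - f)))‖ ≤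
        K * ‖A u - A v‖) := by
  have hAinv : ∀ x : B, A (Function.invFun A x) = x := fun x =>
    Function.rightInverse_invFun hA.2 x
  have hAleft : ∀ u : X, Function.invFun A (A u) = u := fun u =>
    Function.leftInverse_invFun hA.1 u
  -- core estimate in B
  have key : ∀ u v : X, ‖(A u - (F u - f)) - (A v - (F v - f))‖ ≤ K * ‖A u - A v‖ := by
    intro u v
    have : (A u - (F u - f)) - (A v - (F v - f)) = -(F u - F v - (A u - A v)) := by abel
    rw [this, norm_neg]
    exact hnear u v
  -- contraction S on B
  set S : B → B := fun x => x - (F (Function.invFun A x) - f) with hS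
  have hSlip : LipschitzWith ⟨K, hK0.le⟩ S := by
    apply LipschitzWith.of_dist_le_mul
    intro x y
    simp only [hS, dist_eq_norm]
    have h := key (Function.invFun A x) (Function.invFun A y)
    rwa [hAinv x, hAinv y] at h
  have hcontr : ContractingWith ⟨K, hK0.le⟩ S := ⟨by exact_mod_cast hK1, hSlip⟩
  -- fixed point of S
  obtain ⟨x₀, hx₀⟩ := hcontr.exists_fixedPoint (0 : B)
    (edist_ne_top 0 (S 0))
  have hfix : S x₀ = x₀ := hx₀.1
  have hFx₀ : F (Function.invFun A x₀) = f := by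
    have h1 : x₀ - (F (Function.invFun A x₀) - f) = x₀ := hfix
    have h2 := sub_eq_self.mp h1
    exact sub_eq_zero.mp h2
  -- uniqueness of solution
  have huniq : ∀ u v : X, F u = f → F v = f → u = v := by
    intro u v hu hv
    have h := hnear u v
    rw [hu, hv, sub_self, zero_sub, norm_neg] at h
    have : ‖A u - A v‖ = 0 := le_antisymm (by nlinarith [norm_nonneg (A u - A v)]) (norm_nonneg _)
    exact hA.1 (sub_eq_zero.mp (norm_eq_zero.mp this))
  refine ⟨⟨Function.invFun A x₀, hFx₀, fun v hv => huniq v _ hv hFx₀⟩, ?_, ?_⟩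
  · intro u
    constructor
    · intro hu
      rw [hu, sub_self, sub_zero, hAleft]
    · intro hu
      have : A (Function.invFun A (A u - (F u - f))) = A u := by rw [hu]
      rw [hAinv] at this
      have h2 : F u - f = 0 := by
        have h3 : A u - (F u - f) = A u := this
        exact sub_eq_self.mp h3
      exact sub_eq_zero.mp h2
  · intro u v
    rw [hAinv, hAinv]
    exact key u v
end

section
/- Let Ω⊆R^n be open and F : Ω × (R^N⊗S(n)) → R^N a Carathéodory map satisfying the K-condition: there exist a rank-one positive A∈S(N×n), constants β,γ>0 with β+γ<1, and α with α,1/α∈L^∞(Ω), α>0 a.e., such that |A:Z − α(x)(F(x,X+Z)−F(x,X))|² ≤ βν(A)²|Z|² + γ|A:Z|² for all X,Z and a.e. x. Then F satisfies Definition-1 ellipticity with the same A, the same α, and constants λ = (1−γ)/2 > κ = β/2 > 0; moreover F(x,·) is Lipschitz on R^N⊗S(n) with Lipschitz constant at most ‖1/α‖_{L^∞(Ω)}((1+√γ)|A| + √β ν(A)). -/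
/-! With `v = A:Z` and `w = α(x)(F(x,X+Z) − F(x,X))`, the K-condition reads
`|v − w|² ≤ βν²|Z|² + γ|v|²`. Polarization,
`2 v·w = |v|² + |w|² − |v − w|² ≥ (1 − γ)|v|² − βν²|Z|²`, gives the ellipticity inequality after
dividing by `α(x)`; the triangle inequality `|w| ≤ |v| + |v − w| ≤ (1 + √γ)|v| + √β ν|Z|` together
with `|A:Z| ≤ |A||Z|` gives the Lipschitz bound after dividing by `α(x)`, whose inverse is a.e. at
most `‖1/α‖_∞`. -/

open Finset MeasureTheory

/-- Tensors in `ℝ^N ⊗ ℝ^{n×n}` (hessian-type arguments). -/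
abbrev Tens (N n : ℕ) := Fin N → Fin n → Fin n → ℝ

/-- The contraction `A:Z ∈ ℝ^N`, `(A:Z)_α = A_{αβij} Z_{βij}`. -/
def contA {N n : ℕ} (A : Fin N → Fin N → Fin n → Fin n → ℝ) (Z : Tens N n) : Fin N → ℝ :=
  fun α => ∑ β, ∑ i, ∑ j, A α β i j * Z β i j

/-- Squared Euclidean norm on `ℝ^N`. -/
def vnorm2 {N : ℕ} (v : Fin N → ℝ) : ℝ := ∑ α, (v α) ^ 2

/-- Squared Frobenius norm on tensors. -/
def tnorm2 {N n : ℕ} (Z : Tens N n) : ℝ := ∑ α, ∑ i, ∑ j, (Z α i j) ^ 2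

/-- Frobenius norm of a fourth-order tensor. -/
noncomputable def Anorm {N n : ℕ} (A : Fin N → Fin N → Fin n → Fin n → ℝ) : ℝ :=
  Real.sqrt (∑ α, ∑ β, ∑ i, ∑ j, (A α β i j) ^ 2)

open scoped InnerProductSpace

theorem norm_le_of_norm_sub_sq_le {E : Type*} [SeminormedAddCommGroup E] {v w : E} {b g : ℝ}
    (hb : 0 ≤ b) (hg : 0 ≤ g) (h : ‖v - w‖ ^ 2 ≤ b ^ 2 + g ^ 2 * ‖v‖ ^ 2) :
    ‖w‖ ≤ (1 + g) * ‖v‖ + b := by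
  have hvw : ‖v - w‖ ≤ g * ‖v‖ + b :=
    (pow_le_pow_iff_left₀ (norm_nonneg _) (by positivity) two_ne_zero).1
      (h.trans (by nlinarith [mul_nonneg (mul_nonneg hg hb) (norm_nonneg v)]))
  linarith [norm_le_norm_add_norm_sub' w v, norm_sub_rev v w]

theorem inner_ge_of_norm_sub_sq_le {E : Type*} [NormedAddCommGroup E] [InnerProductSpace ℝ E]
    {v w : E} {b g : ℝ} (h : ‖v - w‖ ^ 2 ≤ b + g * ‖v‖ ^ 2) :
    ((1 - g) * ‖v‖ ^ 2 - b) / 2 ≤ ⟪v, w⟫_ℝ := by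
  rw [norm_sub_sq_real] at h
  nlinarith [sq_nonneg ‖w‖]

section Tensor

variable {N n : ℕ}

theorem tnorm2_nonneg (Z : Tens N n) : 0 ≤ tnorm2 Z := by
  unfold tnorm2; positivity

theorem vnorm2_eq_norm_sq (v : Fin N → ℝ) :
    vnorm2 v = ‖(WithLp.toLp 2 v : EuclideanSpace ℝ (Fin N))‖ ^ 2 := by
  rw [EuclideanSpace.real_norm_sq_eq]; rfl

theorem sum_mul_eq_inner (u v : Fin N → ℝ) :
    ∑ γ, u γ * v γ = ⟪(WithLp.toLp 2 u : EuclideanSpace ℝ (Fin N)), WithLp.toLp 2 v⟫_ℝ := by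
  simp [EuclideanSpace.inner_toLp_toLp, dotProduct, mul_comm]

theorem vnorm2_sub_mul_eq_norm_sq (u w : Fin N → ℝ) (a : ℝ) :
    vnorm2 (fun γ => u γ - a * w γ) =
      ‖(WithLp.toLp 2 u : EuclideanSpace ℝ (Fin N)) - a • WithLp.toLp 2 w‖ ^ 2 := by
  rw [vnorm2_eq_norm_sq]; rfl

theorem vnorm2_contA_le (A : Fin N → Fin N → Fin n → Fin n → ℝ) (Z : Tens N n) :
    vnorm2 (contA A Z) ≤ (∑ α, ∑ β, ∑ i, ∑ j, A α β i j ^ 2) * tnorm2 Z := by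
  rw [vnorm2, Finset.sum_mul]
  refine Finset.sum_le_sum fun α _ => ?_
  simpa only [contA, tnorm2, Fintype.sum_prod_type] using
    Finset.sum_mul_sq_le_sq_mul_sq Finset.univ
    (fun p : Fin N × Fin n × Fin n => A α p.1 p.2.1 p.2.2) (fun p => Z p.1 p.2.1 p.2.2)

theorem norm_contA_le (A : Fin N → Fin N → Fin n → Fin n → ℝ) (Z : Tens N n) :
    ‖(WithLp.toLp 2 (contA A Z) : EuclideanSpace ℝ (Fin N))‖ ≤ Anorm A * √(tnorm2 Z) := by
  rw [Anorm, ← Real.sqrt_mul (by positivity), ← Real.sqrt_sq (norm_nonneg _),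
    ← vnorm2_eq_norm_sq]
  exact Real.sqrt_le_sqrt (vnorm2_contA_le A Z)

end Tensor

section KCondition

variable {N n : ℕ} {A : Fin N → Fin N → Fin n → Fin n → ℝ} {G : Tens N n → Fin N → ℝ}
  {a b g ν : ℝ} {X Z : Tens N n}

theorem contA_inner_ge_of_kCondition (ha : 0 < a)
    (hK : vnorm2 (fun γ => contA A Z γ - a * (G (X + Z) γ - G X γ)) ≤
      b * ν ^ 2 * tnorm2 Z + g * vnorm2 (contA A Z)) :
    ∑ γ, contA A Z γ * (G (X + Z) γ - G X γ) ≥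
      ((1 - g) / 2) / a * vnorm2 (contA A Z) - (b / 2) / a * ν ^ 2 * tnorm2 Z := by
  rw [vnorm2_sub_mul_eq_norm_sq, vnorm2_eq_norm_sq (contA A Z)] at hK
  have hinner := inner_ge_of_norm_sub_sq_le hK
  rw [real_inner_smul_right, ← sum_mul_eq_inner, ← vnorm2_eq_norm_sq] at hinner
  calc ((1 - g) / 2) / a * vnorm2 (contA A Z) - (b / 2) / a * ν ^ 2 * tnorm2 Z
      = ((1 - g) * vnorm2 (contA A Z) - b * ν ^ 2 * tnorm2 Z) / 2 / a := by ring
    _ ≤ _ := by rw [div_le_iff₀ ha]; linarith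

theorem sqrt_vnorm2_sub_le_of_kCondition (ha : 0 < a) (hb : 0 ≤ b) (hg : 0 ≤ g) (hν : 0 ≤ ν)
    (hK : vnorm2 (fun γ => contA A Z γ - a * (G (X + Z) γ - G X γ)) ≤
      b * ν ^ 2 * tnorm2 Z + g * vnorm2 (contA A Z)) :
    √(vnorm2 (fun γ => G (X + Z) γ - G X γ)) ≤
      a⁻¹ * ((1 + √g) * Anorm A + √b * ν) * √(tnorm2 Z) := by
  set v : EuclideanSpace ℝ (Fin N) := WithLp.toLp 2 (contA A Z)
  set d : EuclideanSpace ℝ (Fin N) := WithLp.toLp 2 (fun γ => G (X + Z) γ - G X γ)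
  rw [vnorm2_sub_mul_eq_norm_sq, vnorm2_eq_norm_sq (contA A Z)] at hK
  have hK' : ‖v - a • d‖ ^ 2 ≤ (√b * ν * √(tnorm2 Z)) ^ 2 + √g ^ 2 * ‖v‖ ^ 2 := by
    rwa [mul_pow, mul_pow, Real.sq_sqrt hb, Real.sq_sqrt (tnorm2_nonneg Z), Real.sq_sqrt hg]
  have hw := norm_le_of_norm_sub_sq_le (by positivity) (Real.sqrt_nonneg g) hK'
  rw [norm_smul, Real.norm_of_nonneg ha.le] at hw
  rw [vnorm2_eq_norm_sq, Real.sqrt_sq (norm_nonneg _), mul_assoc, le_inv_mul_iff₀ ha]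
  calc a * ‖d‖ ≤ (1 + √g) * ‖v‖ + √b * ν * √(tnorm2 Z) := hw
    _ ≤ (1 + √g) * (Anorm A * √(tnorm2 Z)) + √b * ν * √(tnorm2 Z) := by
      gcongr; exact norm_contA_le A Z
    _ = ((1 + √g) * Anorm A + √b * ν) * √(tnorm2 Z) := by ring

end KCondition

theorem ae_le_toReal_eLpNorm_top {α : Type*} [MeasurableSpace α] {μ : Measure α} {f : α → ℝ}
    (hf : MemLp f ⊤ μ) : ∀ᵐ x ∂μ, f x ≤ (eLpNorm f ⊤ μ).toReal := by
  filter_upwards [ae_le_lpNorm_exponent_top hf] with x hx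
  rw [toReal_eLpNorm hf.1]
  exact (le_abs_self _).trans hx

theorem stmt6_general {n N : ℕ} (Ω : Set (Fin n → ℝ))
    (F : (Fin n → ℝ) → Tens N n → Fin N → ℝ)
    (A : Fin N → Fin N → Fin n → Fin n → ℝ)
    (ν : ℝ) (hν : 0 < ν)
    (be ga : ℝ) (hbe : 0 < be) (hga : 0 < ga)
    (al : (Fin n → ℝ) → ℝ)
    (halpos : ∀ᵐ x ∂(volume.restrict Ω), 0 < al x)
    (halinv : MemLp (fun x => (al x)⁻¹) ⊤ (volume.restrict Ω))
    (hK : ∀ᵐ x ∂(volume.restrict Ω), ∀ X Z : Tens N n,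
      vnorm2 (fun γ => contA A Z γ - al x * (F x (X + Z) γ - F x X γ)) ≤
        be * ν ^ 2 * tnorm2 Z + ga * vnorm2 (contA A Z)) :
    (∀ᵐ x ∂(volume.restrict Ω), ∀ X Z : Tens N n,
      ∑ γ, contA A Z γ * (F x (X + Z) γ - F x X γ) ≥
        ((1 - ga) / 2) / al x * vnorm2 (contA A Z) - (be / 2) / al x * ν ^ 2 * tnorm2 Z) ∧
    (∀ᵐ x ∂(volume.restrict Ω), ∀ X Y : Tens N n,
      Real.sqrt (vnorm2 (fun γ => F x Y γ - F x X γ)) ≤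
        (eLpNorm (fun x => (al x)⁻¹) ⊤ (volume.restrict Ω)).toReal *
          ((1 + Real.sqrt ga) * Anorm A + Real.sqrt be * ν) *
            Real.sqrt (tnorm2 (Y - X))) := by
  refine ⟨?_, ?_⟩
  · filter_upwards [hK, halpos] with x hKx hax X Z
    exact contA_inner_ge_of_kCondition hax (hKx X Z)
  · filter_upwards [hK, halpos, ae_le_toReal_eLpNorm_top halinv] with x hKx hax hinv X Y
    have hLip := sqrt_vnorm2_sub_le_of_kCondition hax hbe.le hga.le hν.le (hKx X (Y - X))
    rw [add_sub_cancel] at hLip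
    refine hLip.trans ?_
    have hA : 0 ≤ Anorm A := Real.sqrt_nonneg _
    gcongr

/-- K-condition ⇒ Definition 1 ellipticity + Lipschitz continuity:
if `F` satisfies the K-condition with data `(A, ν(A), α, β, γ)`, `β + γ < 1`, then `F`
satisfies Definition 1 ellipticity with the same `A`, `α` and constants `λ = (1−γ)/2`,
`κ = β/2`, and `F(x,·)` is Lipschitz with constant `‖1/α‖_∞((1+√γ)|A| + √β ν(A))`. -/
theorem stmt6 {n N : ℕ} (Ω : Set (Fin n → ℝ)) (hΩ : IsOpen Ω)
    (F : (Fin n → ℝ) → Tens N n → Fin N → ℝ)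
    (hFmeas : ∀ X : Tens N n, Measurable fun x => F x X)
    (hFcont : ∀ᵐ x ∂(volume.restrict Ω), Continuous fun X => F x X)
    (A : Fin N → Fin N → Fin n → Fin n → ℝ)
    (hsymm : ∀ α β i j, A α β i j = A β α j i) (ν : ℝ) (hν : 0 < ν)
    (hrank1 : ∀ (η : Fin N → ℝ) (a : Fin n → ℝ),
      ∑ α, ∑ β, ∑ i, ∑ j, A α β i j * η α * a i * η β * a j ≥
        ν * (∑ α, (η α) ^ 2) * (∑ i, (a i) ^ 2))
    (be ga : ℝ) (hbe : 0 < be) (hga : 0 < ga) (hbega : be + ga < 1)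
    (al : (Fin n → ℝ) → ℝ)
    (hal : MemLp al ⊤ (volume.restrict Ω))
    (halpos : ∀ᵐ x ∂(volume.restrict Ω), 0 < al x)
    (halinv : MemLp (fun x => (al x)⁻¹) ⊤ (volume.restrict Ω))
    (hK : ∀ᵐ x ∂(volume.restrict Ω), ∀ X Z : Tens N n,
      vnorm2 (fun γ => contA A Z γ - al x * (F x (X + Z) γ - F x X γ)) ≤
        be * ν ^ 2 * tnorm2 Z + ga * vnorm2 (contA A Z)) :
    (∀ᵐ x ∂(volume.restrict Ω), ∀ X Z : Tens N n,
      ∑ γ, contA A Z γ * (F x (X + Z) γ - F x X γ) ≥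
        ((1 - ga) / 2) / al x * vnorm2 (contA A Z) - (be / 2) / al x * ν ^ 2 * tnorm2 Z) ∧
    (∀ᵐ x ∂(volume.restrict Ω), ∀ X Y : Tens N n,
      Real.sqrt (vnorm2 (fun γ => F x Y γ - F x X γ)) ≤
        (eLpNorm (fun x => (al x)⁻¹) ⊤ (volume.restrict Ω)).toReal *
          ((1 + Real.sqrt ga) * Anorm A + Real.sqrt be * ν) *
            Real.sqrt (tnorm2 (Y - X))) :=
  stmt6_general Ω F A ν hν be ga hbe hga al halpos halinv hK
end

section
/- Let A∈S(2×2) be defined by A_{11ij}=δ_{ij}, A_{12ij}=A_{21ij}=0, A_{2211}=A_{2222}=2m, A_{2212}=A_{2221}=m with m≥8. Then there do not exist constants c₂>c₁>0 such that A_{αβij}X_{βij}X_{αkk} ≥ c₂(X_{βii}X_{βjj}) − c₁(X_{αij}X_{αij}) for all X∈R²⊗S(2). -/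
open Finset

/-- The tensor `A ∈ S(2×2)` of Example 2: `A 0 0 i j = δ_{ij}`, off-diagonal blocks zero,
`A 1 1 = m·[[2,1],[1,2]]`. -/
def exampleTensor (m : ℝ) : Fin 2 → Fin 2 → Fin 2 → Fin 2 → ℝ :=
  fun α β i j =>
    if α = 0 ∧ β = 0 then (if i = j then 1 else 0)
    else if α = 1 ∧ β = 1 then (if i = j then 2 * m else m)
    else 0

/-- For `m ≥ 8`, there are no constants `c₂ > c₁ > 0` such that
`A_{αβij} X_{βij} X_{αkk} ≥ c₂ (X_{βii}X_{βjj}) − c₁ (X_{αij}X_{αij})` holds for all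
`X ∈ ℝ²⊗S(2)`; i.e. the tensor of Example 2 does not satisfy Campanato's condition. -/
theorem stmt10 (m : ℝ) (hm : 8 ≤ m) :
    ¬ ∃ c₁ c₂ : ℝ, 0 < c₁ ∧ c₁ < c₂ ∧
      ∀ X : Fin 2 → Fin 2 → Fin 2 → ℝ, (∀ α i j, X α i j = X α j i) →
        ∑ α, ∑ β, ∑ i, ∑ j, exampleTensor m α β i j * X β i j * (∑ k, X α k k) ≥
          c₂ * (∑ β, (∑ i, X β i i) ^ 2) - c₁ * (∑ α, ∑ i, ∑ j, (X α i j) ^ 2) := by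
  rintro ⟨c₁, c₂, hc₁, hc, h⟩
  have h1 := h (fun α i j => if α = 0 then (if i = j then 1 else 0) else 0)
    (by intro α i j; fin_cases α <;> fin_cases i <;> fin_cases j <;> simp)
  have h2 := h (fun α i j => if α = 0 then 0 else if i = j then -1 else 3)
    (by intro α i j; fin_cases α <;> fin_cases i <;> fin_cases j <;> simp)
  simp only [exampleTensor, Fin.sum_univ_two] at h1 h2
  norm_num at h1 h2
  nlinarith
end

section
/- Let n≥3, b,c as in the counterexample (c>b>0, √n·c+b>1, b+c<1, b²+c²<1/2), and F(X) := X:I − b|X| − c|X:I| on S(n). Then for every α∈(1−α₀,1+α₀) (the range where the K-type estimate with γ>0 holds), there exist X⁰,Z⁰∈S(n) with Z⁰≠0 such that |Z⁰:I − α(F(X⁰+Z⁰)−F(X⁰))| = (|1−α|+αc)|Z⁰:I| + αb|Z⁰| = |Z⁰|. Consequently the estimate |Z:I − α(F(X+Z)−F(X))|² ≤ β|Z|² cannot hold for any β∈(0,1) and any admissible α. -/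
open Finset

/-- Frobenius norm of a square matrix. -/
noncomputable def frob {n : ℕ} (X : Matrix (Fin n) (Fin n) ℝ) : ℝ :=
  Real.sqrt (∑ i, ∑ j, (X i j) ^ 2)

/-- The nonlinearity `F(X) := X:I − b|X| − c|X:I|` of Example 3. -/
noncomputable def Fex {n : ℕ} (b c : ℝ) (X : Matrix (Fin n) (Fin n) ℝ) : ℝ :=
  X.trace - b * frob X - c * |X.trace|

set_option maxHeartbeats 1000000

/-- For `n ≥ 3` and `b, c` as in the counterexample, for every admissible
`α` (i.e. every `α > 0` with `γ(α) + β(α) = 2(|1−α|+αc)² + 2(αb)² < 1`), there exist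
symmetric `X⁰, Z⁰` with `Z⁰ ≠ 0` such that
`|Z⁰:I − α(F(X⁰+Z⁰) − F(X⁰))| = (|1−α|+αc)|Z⁰:I| + αb|Z⁰| = |Z⁰|`.
Consequently no estimate `|Z:I − α(F(X+Z)−F(X))|² ≤ β|Z|²` with `β ∈ (0,1)` can hold. -/
theorem stmt12 {n : ℕ} (hn : 3 ≤ n) (b c : ℝ)
    (hb : 0 < b) (hbc : b < c) (h1 : Real.sqrt n * c + b > 1)
    (h2 : b + c < 1) (h3 : b ^ 2 + c ^ 2 < 1 / 2)
    (α : ℝ) (hα : 0 < α)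
    (hadm : 2 * (|1 - α| + α * c) ^ 2 + 2 * (α * b) ^ 2 < 1) :
    (∃ X₀ Z₀ : Matrix (Fin n) (Fin n) ℝ, X₀.IsSymm ∧ Z₀.IsSymm ∧ Z₀ ≠ 0 ∧
      |Z₀.trace - α * (Fex b c (X₀ + Z₀) - Fex b c X₀)| =
        (|1 - α| + α * c) * |Z₀.trace| + α * b * frob Z₀ ∧
      |Z₀.trace - α * (Fex b c (X₀ + Z₀) - Fex b c X₀)| = frob Z₀) ∧
    ¬ ∃ β : ℝ, 0 < β ∧ β < 1 ∧
      ∀ X Z : Matrix (Fin n) (Fin n) ℝ, X.IsSymm → Z.IsSymm →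
        (Z.trace - α * (Fex b c (X + Z) - Fex b c X)) ^ 2 ≤ β * (frob Z) ^ 2 := by
  
  have hn' : (3:ℝ) ≤ n := by exact_mod_cast hn
  have hnpos : (0:ℝ) < n := by linarith
  have hn1 : (1:ℝ) ≤ Real.sqrt n := by
    rw [show (1:ℝ) = Real.sqrt 1 by simp]
    exact Real.sqrt_le_sqrt (by linarith)
  obtain ⟨A, hA_def⟩ : ∃ x : ℝ, x = |1 - α| + α * c := ⟨_, rfl⟩
  obtain ⟨B, hB_def⟩ : ∃ x : ℝ, x = 1 - α * b := ⟨_, rfl⟩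
  have hc : 0 < c := lt_trans hb hbc
  have hA : 0 < A := by
    have := abs_nonneg (1 - α)
    rw [hA_def]
    nlinarith [mul_pos hα hc]
  have hB : 0 < B := by
    have h4 : (α * b) ^ 2 < 1 := by nlinarith [sq_nonneg (|1 - α| + α * c)]
    have h5 : 0 < α * b := mul_pos hα hb
    rw [hB_def]
    nlinarith
  have hsA : B < Real.sqrt n * A := by
    rcases le_or_gt α 1 with h | h
    · have habs : |1 - α| = 1 - α := abs_of_nonneg (by linarith)
      rw [hA_def, hB_def, habs]
      nlinarith [mul_lt_mul_of_pos_left h1 hα,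
        mul_le_mul_of_nonneg_right hn1 (show (0:ℝ) ≤ 1 - α by linarith)]
    · have habs : |1 - α| = α - 1 := by rw [abs_of_neg (by linarith)]; ring
      rw [hA_def, hB_def, habs]
      nlinarith [mul_lt_mul_of_pos_left h1 hα,
        mul_le_mul_of_nonneg_right hn1 (show (0:ℝ) ≤ α - 1 by linarith)]
  have hnA : 0 < Real.sqrt n * A := lt_trans hB hsA
  have hnAB : B ^ 2 < n * A ^ 2 := by
    have hss : Real.sqrt n * Real.sqrt n = n := Real.mul_self_sqrt (by positivity)
    have h' : B * B < (Real.sqrt n * A) * (Real.sqrt n * A) :=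
      mul_lt_mul' hsA.le hsA hB.le hnA
    have h'' : (Real.sqrt n * A) * (Real.sqrt n * A) = n * A ^ 2 := by
      rw [mul_mul_mul_comm, hss]; ring
    rw [sq, ← h'']; exact h'
  have hABn : (0:ℝ) ≤ n * (n * A ^ 2 - B ^ 2) / 2 := by
    nlinarith [mul_pos hnpos (sub_pos.2 hnAB)]
  obtain ⟨u, hu_def⟩ : ∃ x : ℝ, x = Real.sqrt (n * (n * A ^ 2 - B ^ 2) / 2) / B := ⟨_, rfl⟩
  have hB2 : B ^ 2 ≠ 0 := pow_ne_zero _ hB.ne'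
  have hu2 : u ^ 2 = n * (n * A ^ 2 - B ^ 2) / (2 * B ^ 2) := by
    rw [hu_def, div_pow, Real.sq_sqrt hABn]
    ring
  obtain ⟨f, hf_def⟩ : ∃ x : ℝ, x = n * A / B := ⟨_, rfl⟩
  have hf : 0 < f := by rw [hf_def]; exact div_pos (mul_pos hnpos hA) hB
  have hfsq : (n:ℝ) + 2 * u ^ 2 = f ^ 2 := by
    rw [hu2, hf_def, div_pow]
    field_simp
    ring
  obtain ⟨e0, he0⟩ : ∃ x : Fin n, x = ⟨0, by omega⟩ := ⟨_, rfl⟩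
  obtain ⟨e1, he1⟩ : ∃ x : Fin n, x = ⟨1, by omega⟩ := ⟨_, rfl⟩
  have hne : e0 ≠ e1 := by rw [he0, he1]; simp [Fin.ext_iff]
  obtain ⟨s, hs_def⟩ : ∃ x : ℝ, x = if α ≤ 1 then 1 else -1 := ⟨_, rfl⟩
  have hs2 : s ^ 2 = 1 := by rw [hs_def]; split_ifs <;> norm_num
  have hs1a : (1 - α) * s = |1 - α| := by
    rw [hs_def]; split_ifs with h
    · rw [abs_of_nonneg (by linarith)]; ring
    · rw [abs_of_neg (by linarith)]; ring
  have hsne : s ≠ 0 := by rw [hs_def]; split_ifs <;> norm_num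
  have hsabs : |s| = 1 := by rw [hs_def]; split_ifs <;> norm_num
  obtain ⟨Z₀, hZ_def⟩ : ∃ M : Matrix (Fin n) (Fin n) ℝ,
      M = Matrix.of fun i j => if i = j then s else
        if (i = e0 ∧ j = e1) ∨ (i = e1 ∧ j = e0) then u else 0 := ⟨_, rfl⟩
  have hZentry : ∀ i j, Z₀ i j = if i = j then s else
      if (i = e0 ∧ j = e1) ∨ (i = e1 ∧ j = e0) then u else 0 := by
    intro i j; rw [hZ_def]; rfl
  have hsymm : Z₀.IsSymm := by
    ext i j
    rw [Matrix.transpose_apply, hZentry, hZentry]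
    by_cases hij : i = j
    · simp [hij]
    · rw [if_neg (fun h => hij h.symm), if_neg hij]
      exact if_congr (by tauto) rfl rfl
  have htr : Z₀.trace = n * s := by
    have hd : ∀ i, Z₀.diag i = s := fun i => by
      rw [Matrix.diag_apply, hZentry, if_pos rfl]
    rw [Matrix.trace, Finset.sum_congr rfl (fun i _ => hd i), Finset.sum_const,
      Finset.card_univ, Fintype.card_fin, nsmul_eq_mul]
  have hrow : ∀ i, ∑ j, (Z₀ i j) ^ 2 =
      s ^ 2 + (if i = e0 ∨ i = e1 then u ^ 2 else 0) := by
    intro i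
    have hterm : ∀ j, (Z₀ i j) ^ 2 = (if i = j then s ^ 2 else 0) +
        (if (i = e0 ∧ j = e1) ∨ (i = e1 ∧ j = e0) then u ^ 2 else 0) := by
      intro j
      rw [hZentry]
      by_cases hij : i = j
      · subst hij
        rw [if_pos rfl, if_pos rfl, if_neg, add_zero]
        rintro (⟨h1', h2'⟩ | ⟨h1', h2'⟩) <;> exact hne (h1' ▸ h2' ▸ rfl)
      · rw [if_neg hij, if_neg hij, zero_add]
        split_ifs <;> ring
    rw [Finset.sum_congr rfl (fun j _ => hterm j), Finset.sum_add_distrib]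
    congr 1
    · simp
    · have hone : ∀ a : Fin n, ∑ j : Fin n, (if j = a then u ^ 2 else 0) = u ^ 2 := by
        intro a
        rw [Finset.sum_ite_eq' Finset.univ a (fun _ => u ^ 2), if_pos (Finset.mem_univ a)]
      by_cases hi0 : i = e0
      · rw [if_pos (Or.inl hi0)]
        have hcond : ∀ j : Fin n, ((i = e0 ∧ j = e1) ∨ (i = e1 ∧ j = e0)) ↔ (j = e1) := by
          intro j; constructor
          · rintro (⟨_, h⟩ | ⟨h, _⟩)
            · exact h
            · exact absurd (hi0.symm.trans h) hne
          · exact fun h => Or.inl ⟨hi0, h⟩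
        rw [Finset.sum_congr rfl (fun j _ => if_congr (hcond j) rfl rfl), hone]
      · by_cases hi1 : i = e1
        · rw [if_pos (Or.inr hi1)]
          have hcond : ∀ j : Fin n, ((i = e0 ∧ j = e1) ∨ (i = e1 ∧ j = e0)) ↔ (j = e0) := by
            intro j; constructor
            · rintro (⟨h, _⟩ | ⟨_, h⟩)
              · exact absurd h hi0
              · exact h
            · exact fun h => Or.inr ⟨hi1, h⟩
          rw [Finset.sum_congr rfl (fun j _ => if_congr (hcond j) rfl rfl), hone]
        · rw [if_neg (fun h => h.elim hi0 hi1)]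
          have hno : ∀ j : Fin n, (if (i = e0 ∧ j = e1) ∨ (i = e1 ∧ j = e0) then u ^ 2 else (0:ℝ)) = 0 := by
            intro j
            rw [if_neg (fun h => h.elim (fun hh => hi0 hh.1) (fun hh => hi1 hh.1))]
          rw [Finset.sum_congr rfl (fun j _ => hno j), Finset.sum_const_zero]
  have hfrobsq : ∑ i, ∑ j, (Z₀ i j) ^ 2 = (n:ℝ) + 2 * u ^ 2 := by
    rw [Finset.sum_congr rfl (fun i _ => hrow i), Finset.sum_add_distrib]
    have h1' : ∑ _i : Fin n, s ^ 2 = (n:ℝ) := by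
      rw [Finset.sum_const, Finset.card_univ, Fintype.card_fin, hs2]
      simp
    have h2' : ∑ i : Fin n, (if i = e0 ∨ i = e1 then u ^ 2 else 0) = 2 * u ^ 2 := by
      have hsplit : ∀ i : Fin n, (if i = e0 ∨ i = e1 then u ^ 2 else 0) =
          (if i = e0 then u ^ 2 else 0) + (if i = e1 then u ^ 2 else 0) := by
        intro i
        by_cases hi0 : i = e0
        · subst hi0; rw [if_pos (Or.inl rfl), if_pos rfl, if_neg hne, add_zero]
        · by_cases hi1 : i = e1
          · subst hi1; rw [if_pos (Or.inr rfl), if_neg (Ne.symm hne), if_pos rfl, zero_add]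
          · rw [if_neg (fun h => h.elim hi0 hi1), if_neg hi0, if_neg hi1, add_zero]
      have hone : ∀ a : Fin n, ∑ i : Fin n, (if i = a then u ^ 2 else 0) = u ^ 2 := by
        intro a
        rw [Finset.sum_ite_eq' Finset.univ a (fun _ => u ^ 2), if_pos (Finset.mem_univ a)]
      rw [Finset.sum_congr rfl (fun i _ => hsplit i), Finset.sum_add_distrib, hone, hone]
      ring
    rw [h1', h2']
  have hfrob : frob Z₀ = f := by
    unfold frob
    rw [hfrobsq, hfsq]
    exact Real.sqrt_sq hf.le
  have hF0 : Fex b c (0 : Matrix (Fin n) (Fin n) ℝ) = 0 := by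
    simp [Fex, frob]
  have habs_t : |(n:ℝ) * s| = n := by
    rw [abs_mul, hsabs, abs_of_pos hnpos, mul_one]
  have hkey : (n:ℝ) * A + α * b * f = f := by
    rw [hf_def, hB_def]
    have hBne : (1:ℝ) - α * b ≠ 0 := by rw [hB_def] at hB; linarith
    field_simp
    ring
  have hE : Z₀.trace - α * (Fex b c ((0:Matrix (Fin n) (Fin n) ℝ) + Z₀) -
      Fex b c (0:Matrix (Fin n) (Fin n) ℝ)) = n * A + α * b * f := by
    rw [zero_add, hF0, sub_zero]
    unfold Fex
    rw [htr, hfrob, habs_t]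
    have hr : (n:ℝ) * s - α * (n * s - b * f - c * n) =
        (n:ℝ) * ((1 - α) * s) + α * c * n + α * b * f := by ring
    rw [hr, hs1a, hA_def]
    ring
  have hEpos : 0 < (n:ℝ) * A + α * b * f :=
    add_pos (mul_pos hnpos hA) (mul_pos (mul_pos hα hb) hf)
  have hZne : Z₀ ≠ 0 := by
    intro h
    apply hsne
    have h' := congrFun (congrFun h e0) e0
    rw [hZentry, if_pos rfl] at h'
    simpa using h'
  constructor
  · refine ⟨0, Z₀, Matrix.isSymm_zero, hsymm, hZne, ?_, ?_⟩
    · rw [hE, abs_of_pos hEpos, htr, hfrob, habs_t, ← hA_def]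
      ring
    · rw [hE, abs_of_pos hEpos, hkey, hfrob]
  · rintro ⟨β, hβ0, hβ1, hall⟩
    have h := hall 0 Z₀ Matrix.isSymm_zero hsymm
    rw [hE, hkey, hfrob] at h
    have hlt : β * f ^ 2 < 1 * f ^ 2 :=
      mul_lt_mul_of_pos_right hβ1 (pow_pos hf 2)
    rw [one_mul] at hlt
    linarith
end
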